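/- arXiv:2212.01002 — 6 statements merged into one kernel-verified Lean document; each statement's English description precedes it below -/
import Mathlib

section
/- For every nonzero j ∈ {0,1}^n and every β ∈ ℝ, the matrix U_j · R_Z(−β; p_m) · U_j is the diagonal matrix whose (k,k) entry is exp(i (β/2) (−1)^{⊕_{p ∈ P_j} k_p}). In particular, taking β = β_j = α_j/2^{(n−2)/2}, the module M_j = U_j · R_Z(−β_j; p_m) · U_j equals B_j(α_j). -/
open scoped BigOperators

/-- The CNOT gate with control `c` and target `t`. -/
noncomputable def CNOT (n : ℕ) (c t : Fin n) :
    Matrix (Fin n → Bool) (Fin n → Bool) ℂ :=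
  fun k' k => if k' = Function.update k t (xor (k t) (k c)) then 1 else 0

/-- The gate `R_Z(−β; r)`: diagonal with `(k,k)` entry `exp(i β (−1)^{k_r} / 2)`. -/
noncomputable def RZ (n : ℕ) (β : ℝ) (r : Fin n) :
    Matrix (Fin n → Bool) (Fin n → Bool) ℂ :=
  Matrix.diagonal fun k => Complex.exp (Complex.I *
    Complex.ofReal (β * (if k r then -1 else 1) / 2))

/-- The real sign `(−1)^{j·k}`, where `j·k = j_1 k_1 ⊕ ⋯ ⊕ j_n k_n`; note that for
`P_j = {p : j_p = 1}` this is also `(−1)^{⊕_{p ∈ P_j} k_p}`. -/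
noncomputable def sgn (n : ℕ) (j k : Fin n → Bool) : ℝ :=
  (-1 : ℝ) ^ (Finset.univ.filter fun i : Fin n => (j i && k i) = true).card

/-- The diagonal matrix `B_j(α)` whose `(k,k)` entry is `exp(i α 2^{−n/2} (−1)^{j·k})`. -/
noncomputable def Bmat (n : ℕ) (j : Fin n → Bool) (α : ℝ) :
    Matrix (Fin n → Bool) (Fin n → Bool) ℂ :=
  Matrix.diagonal fun k => Complex.exp (Complex.I *
    Complex.ofReal (α * (1 / Real.sqrt 2) ^ n * sgn n j k))

lemma cnot_prod (n : ℕ) (t : Fin n) :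
    ∀ l : List (Fin n), t ∉ l →
    (l.map fun p => CNOT n p t).prod = fun k' k =>
      if k' = Function.update k t (xor (k t) (l.foldr (fun p b => xor b (k p)) false))
      then 1 else 0 := by
  intro l
  induction l with
  | nil =>
    intro _
    funext a b
    simp [Matrix.one_apply, Function.update_eq_self]
  | cons p l ih =>
    intro ht
    have ht' : t ∉ l := fun h => ht (List.mem_cons_of_mem _ h)
    have hpt : p ≠ t := fun h => ht (h ▸ List.mem_cons_self)
    funext a b
    rw [List.map_cons, List.prod_cons]
    show (CNOT n p t * (l.map fun p => CNOT n p t).prod) a b = _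
    rw [Matrix.mul_apply, ih ht']
    simp only [mul_ite, mul_one, mul_zero]
    rw [Finset.sum_ite_eq']
    simp only [Finset.mem_univ, if_true]
    have hC : Function.update
        (Function.update b t (xor (b t) (l.foldr (fun p x => xor x (b p)) false))) t
        (xor ((Function.update b t (xor (b t) (l.foldr (fun p x => xor x (b p)) false))) t)
          ((Function.update b t (xor (b t) (l.foldr (fun p x => xor x (b p)) false))) p))
        = Function.update b t (xor (b t) ((p :: l).foldr (fun p x => xor x (b p)) false)) := by
      rw [Function.update_idem, Function.update_self, Function.update_of_ne hpt]
      simp [Bool.xor_assoc]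
    show (if a = _ then (1:ℂ) else 0) = _
    rw [hC]

lemma foldr_congr (n : ℕ) (l : List (Fin n)) (k k' : Fin n → Bool)
    (h : ∀ p ∈ l, k p = k' p) :
    l.foldr (fun p b => xor b (k p)) false = l.foldr (fun p b => xor b (k' p)) false := by
  induction l with
  | nil => rfl
  | cons p l ih =>
    simp only [List.foldr_cons]
    rw [ih (fun q hq => h q (List.mem_cons_of_mem _ hq)), h p List.mem_cons_self]

lemma e_xor (a b : Bool) : (if xor a b then (-1:ℝ) else 1)
    = (if a then (-1:ℝ) else 1) * (if b then (-1:ℝ) else 1) := by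
  cases a <;> cases b <;> norm_num

lemma sign_foldr (n : ℕ) (k : Fin n → Bool) (l : List (Fin n)) :
    (if l.foldr (fun p b => xor b (k p)) false then (-1:ℝ) else 1)
      = (-1 : ℝ) ^ (l.filter fun p => k p).length := by
  induction l with
  | nil => simp
  | cons p l ih =>
    simp only [List.foldr_cons, List.filter_cons]
    erw [e_xor, ih]
    by_cases hkp : k p = true <;> simp [hkp, pow_succ, mul_comm]

lemma filter_toList_length (n : ℕ) (s : Finset (Fin n)) (p : Fin n → Bool) :
    (s.toList.filter p).length = (s.filter fun i => p i = true).card := by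
  rw [← Multiset.coe_card]
  have : (↑(s.toList.filter p) : Multiset (Fin n)) = (s.filter fun i => p i = true).val := by
    rw [Finset.filter_val, ← Multiset.coe_toList s.val, Multiset.filter_coe]
    simp [Finset.toList]
  rw [this]; rfl

lemma conj_lemma (n : ℕ) (t : Fin n) (g : (Fin n → Bool) → Bool)
    (hg : ∀ k x, g (Function.update k t x) = g k) (β : ℝ) :
    (show Matrix (Fin n → Bool) (Fin n → Bool) ℂ from
      fun k' k => if k' = Function.update k t (xor (k t) (g k)) then 1 else 0) * RZ n β t *
    (show Matrix (Fin n → Bool) (Fin n → Bool) ℂ from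
      fun k' k => if k' = Function.update k t (xor (k t) (g k)) then 1 else 0) =
    Matrix.diagonal fun k => Complex.exp (Complex.I *
      Complex.ofReal (β * (if xor (k t) (g k) then -1 else 1) / 2)) := by
  set U : Matrix (Fin n → Bool) (Fin n → Bool) ℂ :=
    fun k' k => if k' = Function.update k t (xor (k t) (g k)) then 1 else 0 with hU
  have hUa : ∀ a b, U a b =
      if a = Function.update b t (xor (b t) (g b)) then (1:ℂ) else 0 := fun a b => rfl
  have hσσ : ∀ k : Fin n → Bool, Function.update (Function.update k t (xor (k t) (g k))) t
      (xor ((Function.update k t (xor (k t) (g k))) t)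
        (g (Function.update k t (xor (k t) (g k))))) = k := by
    intro k
    rw [Function.update_idem, Function.update_self, hg, Bool.xor_assoc, Bool.xor_self,
      Bool.xor_false, Function.update_eq_self]
  funext a b
  rw [Matrix.mul_apply]
  have key : ∀ c, (U * RZ n β t) a c * U c b =
      if c = Function.update b t (xor (b t) (g b)) then (U * RZ n β t) a c else 0 := by
    intro c
    rw [hUa c b]
    split <;> simp
  rw [Finset.sum_congr rfl fun c _ => key c, Finset.sum_ite_eq']
  simp only [Finset.mem_univ, if_true]
  rw [RZ, Matrix.mul_diagonal, hUa, hσσ b, Matrix.diagonal_apply]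
  by_cases hab : a = b
  · subst hab
    simp [Function.update_self]
  · simp [hab]

/-- for nonzero `j` (i.e. `P_j = {p : j_p = 1}` nonempty) with `p_m = max P_j`
and `U_j = Π_{p ∈ P_j, p ≠ p_m} CNOT(p, p_m)` (factors pairwise commute, so the product may
be taken along any enumeration of `P_j \ {p_m}`), for every `β ∈ ℝ` the matrix
`U_j · R_Z(−β; p_m) · U_j` is diagonal with `(k,k)` entry `exp(i (β/2) (−1)^{⊕_{p∈P_j} k_p})`;
in particular, for `β = β_j = α_j / 2^{(n−2)/2}` it equals `B_j(α_j)`. -/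
theorem stmt3 (n : ℕ) (j : Fin n → Bool)
    (hP : (Finset.univ.filter fun p : Fin n => j p = true).Nonempty)
    (θ : (Fin n → Bool) → ℝ) (α : (Fin n → Bool) → ℝ)
    (hα : ∀ j', α j' = (1 / Real.sqrt 2) ^ n * ∑ k : Fin n → Bool, sgn n j' k * θ k)
    (β : ℝ) :
    ∀ l : List (Fin n),
      l.Perm (((Finset.univ.filter fun p : Fin n => j p = true).erase
          ((Finset.univ.filter fun p : Fin n => j p = true).max' hP)).toList) →
      ((l.map fun p =>
            CNOT n p ((Finset.univ.filter fun p : Fin n => j p = true).max' hP)).prod *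
          RZ n β ((Finset.univ.filter fun p : Fin n => j p = true).max' hP) *
          (l.map fun p =>
            CNOT n p ((Finset.univ.filter fun p : Fin n => j p = true).max' hP)).prod =
        Matrix.diagonal fun k =>
          Complex.exp (Complex.I * Complex.ofReal (β / 2 * sgn n j k))) ∧
      (β = α j / Real.sqrt 2 ^ ((n : ℤ) - 2) →
        (l.map fun p =>
            CNOT n p ((Finset.univ.filter fun p : Fin n => j p = true).max' hP)).prod *
          RZ n β ((Finset.univ.filter fun p : Fin n => j p = true).max' hP) *
          (l.map fun p =>
            CNOT n p ((Finset.univ.filter fun p : Fin n => j p = true).max' hP)).prod =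
        Bmat n j (α j)) := by
  intro l hl
  set P : Finset (Fin n) := Finset.univ.filter fun p : Fin n => j p = true with hPdef
  set t : Fin n := P.max' hP with htdef
  have htP : t ∈ P := P.max'_mem hP
  have htl : t ∉ l := by
    intro h
    have := hl.mem_iff.mp h
    rw [Finset.mem_toList] at this
    exact (Finset.notMem_erase t P) this
  have hF : ∀ (k : Fin n → Bool) (x : Bool),
      l.foldr (fun p b => xor b ((Function.update k t x) p)) false
        = l.foldr (fun p b => xor b (k p)) false := by
    intro k x
    exact foldr_congr n l _ _ fun p hp =>
      Function.update_of_ne (fun h => htl (by rw [← h]; exact hp)) x k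
  have hsgn : ∀ k : Fin n → Bool,
      (if xor (k t) (l.foldr (fun p b => xor b (k p)) false) then (-1:ℝ) else 1)
        = sgn n j k := by
    intro k
    have hset : (Finset.univ.filter fun i : Fin n => (j i && k i) = true)
        = P.filter fun i => k i = true := by
      ext i
      simp [hPdef, Bool.and_eq_true, and_assoc]
    have hFk : (if l.foldr (fun p b => xor b (k p)) false then (-1:ℝ) else 1)
        = (-1 : ℝ) ^ ((P.erase t).filter fun i => k i = true).card := by
      rw [sign_foldr n k l, ← filter_toList_length n (P.erase t) (fun p => k p)]
      congr 1
      rw [← List.countP_eq_length_filter, ← List.countP_eq_length_filter]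
      exact hl.countP_eq _
    have hcard : (P.filter fun i => k i = true).card
        = ((P.erase t).filter fun i => k i = true).card + (if k t then 1 else 0) := by
      rw [Finset.filter_erase]
      by_cases hk : k t = true
      · have htm : t ∈ P.filter fun i => k i = true := Finset.mem_filter.mpr ⟨htP, hk⟩
        rw [Finset.card_erase_of_mem htm, if_pos hk]
        have hpos : 0 < (P.filter fun i => k i = true).card := Finset.card_pos.mpr ⟨t, htm⟩
        omega
      · have htm : t ∉ P.filter fun i => k i = true := by
          intro h; exact hk (Finset.mem_filter.mp h).2
        rw [Finset.erase_eq_of_notMem htm, if_neg hk]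
        omega
    rw [show sgn n j k
        = (-1:ℝ) ^ (Finset.univ.filter fun i : Fin n => (j i && k i) = true).card from rfl,
      hset, hcard, pow_add, e_xor, hFk]
    cases hkt : k t <;> simp [hkt] <;> ring
  have step1 : (l.map fun p => CNOT n p t).prod * RZ n β t *
        (l.map fun p => CNOT n p t).prod =
      Matrix.diagonal fun k =>
        Complex.exp (Complex.I * Complex.ofReal (β / 2 * sgn n j k)) := by
    rw [cnot_prod n t l htl]
    refine (conj_lemma n t (fun k => l.foldr (fun p b => xor b (k p)) false)
      (fun k x => hF k x) β).trans ?_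
    have heq : (fun k : Fin n → Bool => Complex.exp (Complex.I *
        Complex.ofReal (β * (if xor (k t) (l.foldr (fun p b => xor b (k p)) false)
          then -1 else 1) / 2)))
        = fun k => Complex.exp (Complex.I * Complex.ofReal (β / 2 * sgn n j k)) := by
      funext k
      have hx : β * (if xor (k t) (l.foldr (fun p b => xor b (k p)) false)
          then (-1:ℝ) else 1) / 2 = β / 2 * sgn n j k := by
        rw [← hsgn k]; ring
      rw [hx]
    rw [heq]
  refine ⟨step1, fun hβ => ?_⟩
  rw [step1, Bmat]
  have h2 : Real.sqrt 2 ≠ 0 := by positivity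
  have hβ2 : β / 2 = α j * (1 / Real.sqrt 2) ^ n := by
    rw [hβ, zpow_sub₀ h2, zpow_natCast, show ((2:ℤ)) = ((2:ℕ):ℤ) from rfl, zpow_natCast,
      Real.sq_sqrt (by norm_num : (0:ℝ) ≤ 2), div_pow, one_pow]
    have hpn : Real.sqrt 2 ^ n ≠ 0 := pow_ne_zero _ h2
    field_simp
  have heq2 : (fun k : Fin n → Bool =>
      Complex.exp (Complex.I * Complex.ofReal (β / 2 * sgn n j k)))
      = fun k => Complex.exp (Complex.I *
        Complex.ofReal (α j * (1 / Real.sqrt 2) ^ n * sgn n j k)) := by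
    funext k
    rw [hβ2]
  rw [heq2]
end

section
/- For every θ : {0,1}^n → ℝ with Walsh coefficients α_j and β_j = α_j/2^{(n−2)/2}, the product Π_{j ∈ {0,1}^n, j ≠ 0^n} M_j equals e^{−i θ̄} · D(θ), where θ̄ = 2^{−n} Σ_{k ∈ {0,1}^n} θ_k. (All factors M_j are diagonal matrices, so the product is independent of the order of the factors.) -/
open scoped BigOperators

/-- The diagonal matrix `D(θ)` whose `(k,k)` entry is `exp(i θ_k)`. -/
noncomputable def Dmat (n : ℕ) (θ : (Fin n → Bool) → ℝ) :
    Matrix (Fin n → Bool) (Fin n → Bool) ℂ :=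
  Matrix.diagonal fun k => Complex.exp (Complex.I * Complex.ofReal (θ k))

/-- `p_m`: the position of the last `1`-bit of `j` (i.e. `max P_j`); for `j = 0…0` it
defaults to the first qubit. -/
noncomputable def pmQ (n : ℕ) (hn : 0 < n) (j : Fin n → Bool) : Fin n :=
  WithBot.unbotD ⟨0, hn⟩ ((Finset.univ.filter fun p : Fin n => j p = true).max)

/-- `U_j = Π_{p ∈ P_j, p ≠ p_m} CNOT(p, p_m)` (all factors pairwise commute, so any
fixed enumeration of `P_j \ {p_m}` gives the same matrix). -/
noncomputable def Uj (n : ℕ) (hn : 0 < n) (j : Fin n → Bool) :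
    Matrix (Fin n → Bool) (Fin n → Bool) ℂ :=
  (((Finset.univ.filter fun p : Fin n => j p = true).erase (pmQ n hn j)).toList.map
    fun p => CNOT n p (pmQ n hn j)).prod

/-- The module `M_j = U_j · R_Z(−β; p_m) · U_j`. -/
noncomputable def Mj (n : ℕ) (hn : 0 < n) (j : Fin n → Bool) (β : ℝ) :
    Matrix (Fin n → Bool) (Fin n → Bool) ℂ :=
  Uj n hn j * RZ n β (pmQ n hn j) * Uj n hn j

noncomputable def permMat (n : ℕ) (f : (Fin n → Bool) → (Fin n → Bool)) :
    Matrix (Fin n → Bool) (Fin n → Bool) ℂ :=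
  fun k' k => if k' = f k then 1 else 0

lemma permMat_mul (n : ℕ) (f : (Fin n → Bool) → (Fin n → Bool))
    (hf : Function.Involutive f) (A : Matrix (Fin n → Bool) (Fin n → Bool) ℂ) :
    permMat n f * A = A.submatrix f id := by
  ext i j
  rw [Matrix.mul_apply]
  rw [Finset.sum_congr rfl (fun b _ => show (permMat n f i b) * A b j
    = (if f i = b then 1 else 0) * A b j by
      congr 1
      simp only [permMat]
      congr 1
      rw [eq_iff_iff]
      constructor <;> intro h
      · rw [h, hf]
      · rw [← h, hf])]
  simp [Matrix.submatrix_apply]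

lemma mul_permMat (n : ℕ) (f : (Fin n → Bool) → (Fin n → Bool))
    (A : Matrix (Fin n → Bool) (Fin n → Bool) ℂ) :
    A * permMat n f = A.submatrix id f := by
  ext i j
  rw [Matrix.mul_apply]
  simp [permMat, eq_comm, Matrix.submatrix_apply]

lemma permMat_id (n : ℕ) : permMat n id = 1 := by
  ext i j
  simp [permMat, Matrix.one_apply, eq_comm]

/-- parity of a list of bits -/
def parL (n : ℕ) (L : List (Fin n)) (k : Fin n → Bool) : Bool :=
  (L.map k).foldr xor false

lemma parL_cons (n : ℕ) (p : Fin n) (L : List (Fin n)) (k : Fin n → Bool) :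
    parL n (p :: L) k = xor (k p) (parL n L k) := rfl

lemma parL_congr (n : ℕ) (L : List (Fin n)) (k k' : Fin n → Bool)
    (h : ∀ p ∈ L, k p = k' p) : parL n L k = parL n L k' := by
  induction L with
  | nil => rfl
  | cons a L ih =>
    rw [parL_cons, parL_cons, h a (by simp), ih (fun p hp => h p (by simp [hp]))]

lemma CNOT_eq (n : ℕ) (c t : Fin n) :
    CNOT n c t = permMat n (fun k => Function.update k t (xor (k t) (k c))) := rfl

lemma g_invol (n : ℕ) (c t : Fin n) (hct : c ≠ t) :
    Function.Involutive (fun k : Fin n → Bool => Function.update k t (xor (k t) (k c))) := by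
  intro k
  simp only [Function.update_idem, Function.update_self, Function.update_of_ne hct]
  rw [Bool.xor_assoc, Bool.xor_self, Bool.xor_false, Function.update_eq_self]

lemma permMat_mul_permMat (n : ℕ) (f g : (Fin n → Bool) → (Fin n → Bool))
    (hf : Function.Involutive f) :
    permMat n f * permMat n g = permMat n (f ∘ g) := by
  rw [permMat_mul n f hf]
  ext i j
  simp only [Matrix.submatrix_apply, permMat, id_eq, Function.comp_apply]
  congr 1
  rw [eq_iff_iff]
  exact ⟨fun h => by rw [← h, hf], fun h => by rw [h, hf]⟩

lemma prod_CNOT (n : ℕ) (t : Fin n) (L : List (Fin n)) (hL : ∀ p ∈ L, p ≠ t) :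
    (L.map fun p => CNOT n p t).prod
      = permMat n (fun k => Function.update k t (xor (k t) (parL n L k))) := by
  induction L with
  | nil =>
    have h : (fun k : Fin n → Bool => Function.update k t (xor (k t) (parL n [] k))) = id := by
      funext k
      simp [parL]
    rw [h, permMat_id]
    simp
  | cons p L ih =>
    have hpt : p ≠ t := hL p (by simp)
    rw [List.map_cons, List.prod_cons, ih (fun q hq => hL q (by simp [hq])), CNOT_eq,
      permMat_mul_permMat n _ _ (g_invol n p t hpt)]
    have hfun : ((fun k : Fin n → Bool => Function.update k t (xor (k t) (k p))) ∘
        fun k => Function.update k t (xor (k t) (parL n L k)))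
        = fun k => Function.update k t (xor (k t) (parL n (p :: L) k)) := by
      funext k
      simp only [Function.comp_apply, Function.update_idem, Function.update_self,
      Function.update_of_ne hpt, parL_cons]
      congr 1
      rw [Bool.xor_assoc, Bool.xor_comm (parL n L k) (k p)]
    rw [hfun]

lemma F_invol (n : ℕ) (t : Fin n) (L : List (Fin n)) (hL : ∀ p ∈ L, p ≠ t) :
    Function.Involutive (fun k : Fin n → Bool =>
      Function.update k t (xor (k t) (parL n L k))) := by
  intro k
  have hpar : parL n L (Function.update k t (xor (k t) (parL n L k))) = parL n L k :=
    parL_congr n L _ _ (fun p hp => Function.update_of_ne (hL p hp) _ _)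
  simp only [hpar, Function.update_idem, Function.update_self]
  rw [Bool.xor_assoc, Bool.xor_self, Bool.xor_false, Function.update_eq_self]

lemma diagonal_submatrix (n : ℕ) (d : (Fin n → Bool) → ℂ)
    (F : (Fin n → Bool) → (Fin n → Bool)) (hF : Function.Injective F) :
    (Matrix.diagonal d).submatrix F F = Matrix.diagonal (fun k => d (F k)) := by
  ext i j
  by_cases h : i = j
  · subst h; simp
  · rw [Matrix.submatrix_apply, Matrix.diagonal_apply_ne _ (fun hc => h (hF hc)),
      Matrix.diagonal_apply_ne _ h]

lemma parL_eq_countP (n : ℕ) (L : List (Fin n)) (k : Fin n → Bool) :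
    parL n L k = decide (Odd (L.countP fun p => k p)) := by
  induction L with
  | nil => simp [parL, Nat.odd_iff]
  | cons a L ih =>
    rw [parL_cons, ih, List.countP_cons]
    cases hka : k a <;>
      simp [hka, Nat.odd_add_one, Nat.not_odd_iff_even, Bool.true_xor, decide_not,
        Nat.odd_iff, Nat.even_iff]
    rcases Nat.mod_two_eq_zero_or_one (List.countP (fun p => k p) L) with h | h <;> simp [h]

lemma countP_toList {α : Type*} [DecidableEq α] (s : Finset α) (p : α → Bool) :
    s.toList.countP p = (s.filter (fun a => p a = true)).card := by
  have hp : p = fun b => decide (p b = true) := by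
    funext b; cases p b <;> simp
  rw [Finset.toList, hp, ← Multiset.coe_countP (fun b => p b = true), Multiset.coe_toList,
    Multiset.countP_eq_card_filter]
  rw [Finset.card, Finset.filter_val]
  congr 1
  simp

noncomputable def RZd (β : ℝ) (b : Bool) : ℂ :=
  Complex.exp (Complex.I * Complex.ofReal (β * (if b then -1 else 1) / 2))

lemma sign_aux (m : ℕ) (b : Bool) :
    (if (xor b (decide (Odd m))) then (-1:ℝ) else 1)
      = (-1:ℝ) ^ (m + if b then 1 else 0) := by
  rcases Nat.even_or_odd m with h | h
  · have hd : decide (Odd m) = false := by simp [Nat.not_odd_iff_even.mpr h]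
    cases b <;> simp [hd, h.neg_one_pow, pow_succ]
  · have hd : decide (Odd m) = true := by simp [h]
    cases b <;> simp [hd, h.neg_one_pow, pow_succ]

lemma pm_mem (n : ℕ) (hn : 0 < n) (j : Fin n → Bool) (hj : j ≠ fun _ => false) :
    pmQ n hn j ∈ Finset.univ.filter (fun p : Fin n => j p = true) := by
  have hne : (Finset.univ.filter (fun p : Fin n => j p = true)).Nonempty := by
    rw [Finset.filter_nonempty_iff]
    by_contra hc
    push_neg at hc
    exact hj (funext fun i => by simpa using hc i (Finset.mem_univ i))
  have : pmQ n hn j = (Finset.univ.filter (fun p : Fin n => j p = true)).max' hne := by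
    rw [pmQ, ← Finset.coe_max' hne, WithBot.unbotD_coe]
  rw [this]
  exact Finset.max'_mem _ hne

set_option maxHeartbeats 1000000 in
set_option maxHeartbeats 1000000 in
lemma Mj_eq_diagonal (n : ℕ) (hn : 0 < n) (j : Fin n → Bool) (β : ℝ)
    (hj : j ≠ fun _ => false) :
    Mj n hn j β = Matrix.diagonal (fun k =>
      Complex.exp (Complex.I * Complex.ofReal (β * sgn n j k / 2))) := by
  set t := pmQ n hn j with ht
  set s := Finset.univ.filter (fun p : Fin n => j p = true) with hs
  set L := (s.erase t).toList with hLdef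
  have htmem : t ∈ s := pm_mem n hn j hj
  have hL : ∀ p ∈ L, p ≠ t := by
    intro p hp
    rw [hLdef, Finset.mem_toList, Finset.mem_erase] at hp
    exact hp.1
  have hU : Uj n hn j = permMat n (fun k =>
      Function.update k t (xor (k t) (parL n L k))) := prod_CNOT n t L hL
  have hFinv := F_invol n t L hL
  rw [Mj, hU, permMat_mul n _ hFinv, mul_permMat, Matrix.submatrix_submatrix]
  rw [show ((id : (Fin n → Bool) → _) ∘ (fun k =>
      Function.update k t (xor (k t) (parL n L k)))) = (fun k =>
      Function.update k t (xor (k t) (parL n L k))) from rfl]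
  rw [show ((fun k : Fin n → Bool =>
      Function.update k t (xor (k t) (parL n L k))) ∘ id) = (fun k =>
      Function.update k t (xor (k t) (parL n L k))) from rfl]
  rw [RZ, diagonal_submatrix n _ _ hFinv.injective]
  have hsgn : ∀ k : Fin n → Bool,
      (if xor (k t) (parL n L k) then (-1:ℝ) else 1) = sgn n j k := by
    intro k
    have hcard : (Finset.univ.filter fun i : Fin n => (j i && k i) = true)
        = s.filter (fun i => k i = true) := by
      rw [hs, Finset.filter_filter]
      apply Finset.filter_congr
      intro i _
      simp [Bool.and_eq_true]
    have hsplit : (s.filter (fun i => k i = true)).card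
        = ((s.erase t).filter (fun i => k i = true)).card + (if k t then 1 else 0) := by
      rw [Finset.filter_erase]
      by_cases hkt : k t = true
      · rw [Finset.card_erase_of_mem (Finset.mem_filter.mpr ⟨htmem, hkt⟩), hkt, if_pos rfl]
        have hpos : 0 < (s.filter (fun i => k i = true)).card :=
          Finset.card_pos.mpr ⟨t, Finset.mem_filter.mpr ⟨htmem, hkt⟩⟩
        omega
      · have h' : t ∉ Finset.filter (fun i => k i = true) s :=
          fun hc => hkt (Finset.mem_filter.mp hc).2
        rw [Finset.erase_eq_of_notMem h', if_neg hkt, Nat.add_zero]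
    have hpar : parL n L k
        = decide (Odd (((s.erase t).filter (fun i => k i = true)).card)) := by
      rw [hLdef, parL_eq_countP, countP_toList]
    rw [sgn, hcard, hsplit, hpar, sign_aux]
  apply congrArg
  funext k
  rw [Function.update_self, hsgn k]

lemma sgn_eq_prod (n : ℕ) (j k : Fin n → Bool) :
    sgn n j k = ∏ i : Fin n, (if (j i && k i) = true then (-1:ℝ) else 1) := by
  rw [sgn, ← Finset.prod_filter]
  rw [Finset.prod_const]

lemma sgn_mul (n : ℕ) (j k k' : Fin n → Bool) :
    sgn n j k * sgn n j k' = sgn n j (fun i => xor (k i) (k' i)) := by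
  rw [sgn_eq_prod, sgn_eq_prod, sgn_eq_prod, ← Finset.prod_mul_distrib]
  apply Finset.prod_congr rfl
  intro i _
  cases hj : j i <;> cases hk : k i <;> cases hk' : k' i <;> norm_num

lemma sum_sgn (n : ℕ) (m : Fin n → Bool) :
    ∑ j : Fin n → Bool, sgn n j m = ∏ i : Fin n, (if m i then (0:ℝ) else 2) := by
  have h1 : ∑ j : Fin n → Bool, sgn n j m
      = ∑ j : Fin n → Bool, ∏ i : Fin n, (if (j i && m i) = true then (-1:ℝ) else 1) :=
    Finset.sum_congr rfl (fun j _ => sgn_eq_prod n j m)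
  rw [h1]
  have h2 := Finset.prod_univ_sum (fun _ : Fin n => (Finset.univ : Finset Bool))
    (fun i b => if (b && m i) = true then (-1:ℝ) else 1)
  rw [Fintype.piFinset_univ] at h2
  rw [← h2]
  apply Finset.prod_congr rfl
  intro i _
  cases hm : m i <;> simp [hm, Fintype.sum_bool] <;> norm_num

lemma sum_sgn_mul (n : ℕ) (k k' : Fin n → Bool) :
    ∑ j : Fin n → Bool, sgn n j k * sgn n j k'
      = if k = k' then (2:ℝ)^n else 0 := by
  rw [Finset.sum_congr rfl (fun j _ => sgn_mul n j k k'), sum_sgn]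
  by_cases h : k = k'
  · subst h
    simp
  · rw [if_neg h]
    obtain ⟨i, hi⟩ := Function.ne_iff.mp h
    apply Finset.prod_eq_zero (Finset.mem_univ i)
    rw [if_pos]
    cases hk : k i <;> cases hk' : k' i <;> simp_all

lemma sgn_zero (n : ℕ) (k : Fin n → Bool) : sgn n (fun _ => false) k = 1 := by
  simp [sgn]

lemma scal_eq (n : ℕ) (S : ℝ) :
    ((1 / Real.sqrt 2) ^ n * S) / Real.sqrt 2 ^ ((n : ℤ) - 2) / 2
      = ((2:ℝ)^n)⁻¹ * S := by
  have hr0 : Real.sqrt 2 ≠ 0 := by positivity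
  have hrr : Real.sqrt 2 * Real.sqrt 2 = 2 := Real.mul_self_sqrt (by norm_num)
  have h1 : Real.sqrt 2 ^ ((n : ℤ) - 2) = Real.sqrt 2 ^ n / 2 := by
    rw [zpow_sub₀ hr0, zpow_natCast, show ((2:ℤ) = ((2:ℕ) : ℤ)) from rfl, zpow_natCast,
      pow_two, hrr]
  have h2n : (2:ℝ)^n = Real.sqrt 2 ^ n * Real.sqrt 2 ^ n := by
    rw [← mul_pow, hrr]
  have hrn : Real.sqrt 2 ^ n ≠ 0 := pow_ne_zero _ hr0
  rw [h1, h2n]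
  field_simp
  rw [mul_comm, ← mul_assoc, ← mul_pow, mul_one_div_cancel hr0, one_pow, one_mul]

lemma key_sum (n : ℕ) (θ α β : (Fin n → Bool) → ℝ)
    (hα : ∀ j, α j = (1 / Real.sqrt 2) ^ n * ∑ k : Fin n → Bool, sgn n j k * θ k)
    (hβ : ∀ j, β j = α j / Real.sqrt 2 ^ ((n : ℤ) - 2)) (k' : Fin n → Bool) :
    ∑ j ∈ (Finset.univ.filter fun j : Fin n → Bool => j ≠ fun _ => false),
        (β j * sgn n j k' / 2)
      = θ k' - ((2:ℝ)^n)⁻¹ * ∑ k : Fin n → Bool, θ k := by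
  classical
  set c : ℝ := ((2:ℝ)^n)⁻¹ with hc
  set E := (Finset.univ.filter fun j : Fin n → Bool => j ≠ fun _ => false) with hE
  have hβ2 : ∀ j, β j / 2 = c * ∑ k : Fin n → Bool, sgn n j k * θ k := by
    intro j
    rw [hβ, hα]
    exact scal_eq n _
  have hterm : ∀ j, β j * sgn n j k' / 2
      = ∑ k : Fin n → Bool, (c * θ k) * (sgn n j k * sgn n j k') := by
    intro j
    rw [show β j * sgn n j k' / 2 = (β j / 2) * sgn n j k' from by ring, hβ2 j,
      mul_assoc, Finset.sum_mul, Finset.mul_sum]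
    apply Finset.sum_congr rfl
    intro k _
    ring
  rw [Finset.sum_congr rfl (fun j _ => hterm j), Finset.sum_comm]
  have hinner : ∀ k, ∑ j ∈ E, (c * θ k) * (sgn n j k * sgn n j k')
      = (c * θ k) * ((if k = k' then (2:ℝ)^n else 0) - 1) := by
    intro k
    rw [← Finset.mul_sum]
    congr 1
    have hEerase : E = Finset.univ.erase (fun _ => false) :=
      Finset.filter_ne' Finset.univ (fun _ => false)
    rw [hEerase, Finset.sum_erase_eq_sub (Finset.mem_univ _), sum_sgn_mul,
      sgn_zero, sgn_zero, one_mul]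
  rw [Finset.sum_congr rfl (fun k _ => hinner k)]
  have hsplit : ∀ k, (c * θ k) * ((if k = k' then (2:ℝ)^n else 0) - 1)
      = (if k = k' then θ k * (c * (2:ℝ)^n) else 0) - c * θ k := by
    intro k
    by_cases h : k = k' <;> simp [h] <;> ring
  rw [Finset.sum_congr rfl (fun k _ => hsplit k), Finset.sum_sub_distrib,
    Finset.sum_ite_eq' Finset.univ k' (fun k => θ k * (c * (2:ℝ)^n))]
  have hc1 : c * (2:ℝ)^n = 1 := inv_mul_cancel₀ (pow_ne_zero _ two_ne_zero)
  rw [hc1, if_pos (Finset.mem_univ k'), mul_one, ← Finset.mul_sum]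

lemma diag_list_prod (n : ℕ) {ι : Type*} (l : List ι) (d : ι → (Fin n → Bool) → ℂ) :
    (l.map fun j => Matrix.diagonal (d j)).prod
      = Matrix.diagonal (fun k => (l.map fun j => d j k).prod) := by
  induction l with
  | nil => simp [Matrix.diagonal_one]
  | cons a l ih =>
    rw [List.map_cons, List.prod_cons, ih, Matrix.diagonal_mul_diagonal]
    simp [List.prod_cons]

lemma list_prod_toList {ι : Type*} (s : Finset ι) (f : ι → ℂ) :
    (s.toList.map f).prod = ∏ j ∈ s, f j := by
  have h1 : ((s.toList.map f : List ℂ) : Multiset ℂ) = s.val.map f := by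
    rw [← Multiset.map_coe, Finset.toList, Multiset.coe_toList]
  rw [← Multiset.prod_coe, h1]
  rfl


/-- for every `θ` with Walsh coefficients `α_j` and `β_j = α_j / 2^{(n−2)/2}`,
the product `Π_{j ≠ 0^n} M_j`, taken in any order (all factors are diagonal), equals
`e^{−i θ̄} · D(θ)` with `θ̄ = 2^{−n} Σ_k θ_k`. -/
theorem stmt4 (n : ℕ) (hn : 0 < n) (θ : (Fin n → Bool) → ℝ)
    (α : (Fin n → Bool) → ℝ)
    (hα : ∀ j, α j = (1 / Real.sqrt 2) ^ n * ∑ k : Fin n → Bool, sgn n j k * θ k)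
    (β : (Fin n → Bool) → ℝ)
    (hβ : ∀ j, β j = α j / Real.sqrt 2 ^ ((n : ℤ) - 2)) :
    ∀ l : List (Fin n → Bool),
      l.Perm (Finset.univ.filter fun j : Fin n → Bool => j ≠ fun _ => false).toList →
      (l.map fun j => Mj n hn j (β j)).prod =
        Complex.exp (-Complex.I *
            Complex.ofReal (((2 : ℝ) ^ n)⁻¹ * ∑ k : Fin n → Bool, θ k)) •
          Dmat n θ := by
  intro l hperm
  have hmem : ∀ j ∈ l, j ≠ (fun _ : Fin n => false) := by
    intro j hj
    have h := hperm.subset hj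
    rw [Finset.mem_toList, Finset.mem_filter] at h
    exact h.2
  have hmap : (l.map fun j => Mj n hn j (β j))
      = l.map fun j => Matrix.diagonal (fun k =>
          Complex.exp (Complex.I * Complex.ofReal (β j * sgn n j k / 2))) :=
    List.map_congr_left (fun j hj => Mj_eq_diagonal n hn j (β j) (hmem j hj))
  rw [hmap, diag_list_prod]
  have hentry : ∀ k, (l.map fun j =>
      Complex.exp (Complex.I * Complex.ofReal (β j * sgn n j k / 2))).prod
      = Complex.exp (-Complex.I *
            Complex.ofReal (((2:ℝ)^n)⁻¹ * ∑ k : Fin n → Bool, θ k))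
        * Complex.exp (Complex.I * Complex.ofReal (θ k)) := by
    intro k
    have hpm := (hperm.map (fun j =>
      Complex.exp (Complex.I * Complex.ofReal (β j * sgn n j k / 2)))).prod_eq
    rw [hpm, list_prod_toList, ← Complex.exp_sum]
    have hsum : ∑ j ∈ (Finset.univ.filter fun j : Fin n → Bool => j ≠ fun _ => false),
        Complex.I * Complex.ofReal (β j * sgn n j k / 2)
        = Complex.I * Complex.ofReal
            (∑ j ∈ (Finset.univ.filter fun j : Fin n → Bool => j ≠ fun _ => false),
              (β j * sgn n j k / 2)) := by
      rw [Complex.ofReal_sum, Finset.mul_sum]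
    rw [hsum, key_sum n θ α β hα hβ k, ← Complex.exp_add]
    congr 1
    push_cast
    ring
  rw [Dmat, ← Matrix.diagonal_smul]
  apply congrArg
  funext k
  rw [hentry k]
  simp [smul_eq_mul]
end

section
/- Let t ∈ {1,…,n}, let (c_1,…,c_s) be a finite list of elements of {1,…,n}\{t} in which every value occurs an even number of times, and let β_0, β_1, …, β_s ∈ ℝ. Then the matrix S obtained by applying, in order, R_Z(−β_0;t), CNOT(c_1,t), R_Z(−β_1;t), CNOT(c_2,t), …, CNOT(c_s,t), R_Z(−β_s;t) (i.e., the matrix product R_Z(−β_s;t)·CNOT(c_s,t)···R_Z(−β_1;t)·CNOT(c_1,t)·R_Z(−β_0;t)) is a diagonal matrix. -/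
/-- The matrix obtained by applying, in order,
`R_Z(−β₀;t), CNOT(c₁,t), R_Z(−β₁;t), CNOT(c₂,t), …, CNOT(c_s,t), R_Z(−β_s;t)`,
where `(c₁, …, c_s)` is the given list of controls; as a matrix product this is
`R_Z(−β_s;t) · CNOT(c_s,t) ⋯ R_Z(−β₁;t) · CNOT(c₁,t) · R_Z(−β₀;t)`. -/
noncomputable def altSeq (n : ℕ) (t : Fin n) :
    (ℕ → ℝ) → List (Fin n) → Matrix (Fin n → Bool) (Fin n → Bool) ℂ
  | β, [] => RZ n (β 0) t
  | β, c :: cs => altSeq n t (fun i => β (i + 1)) cs * CNOT n c t * RZ n (β 0) t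

def par {n : ℕ} (cs : List (Fin n)) (k : Fin n → Bool) : Bool :=
  cs.foldr (fun c b => xor (k c) b) false

lemma par_congr {n : ℕ} (cs : List (Fin n)) (k₁ k₂ : Fin n → Bool)
    (h : ∀ c ∈ cs, k₁ c = k₂ c) : par cs k₁ = par cs k₂ := by
  induction cs with
  | nil => rfl
  | cons c cs ih =>
    have h1 : par (c :: cs) k₁ = xor (k₁ c) (par cs k₁) := rfl
    have h2 : par (c :: cs) k₂ = xor (k₂ c) (par cs k₂) := rfl
    rw [h1, h2, h c (by simp), ih (fun c hc => h c (by simp [hc]))]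

lemma par_true_iff {n : ℕ} (cs : List (Fin n)) (k : Fin n → Bool) :
    par cs k = true ↔ Odd (cs.countP (fun c => k c)) := by
  induction cs with
  | nil => simp [par]
  | cons c cs ih =>
    have h1 : par (c :: cs) k = xor (k c) (par cs k) := rfl
    rw [h1, List.countP_cons]
    cases hkc : k c <;>
      simp [hkc, Nat.odd_add_one, ← Nat.not_odd_iff_even, ← ih]

lemma key {n : ℕ} (t : Fin n) (cs : List (Fin n)) (hct : ∀ c ∈ cs, c ≠ t)
    (β : ℕ → ℝ) (k' k : Fin n → Bool)
    (h : k' ≠ Function.update k t (xor (k t) (par cs k))) :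
    altSeq n t β cs k' k = 0 := by
  induction cs generalizing β k' k with
  | nil =>
    have hk : k' ≠ k := by simpa [par, Function.update_eq_self] using h
    simp [altSeq, RZ, Matrix.diagonal, hk]
  | cons c cs ih =>
    have hc : c ≠ t := hct c (by simp)
    have hct' : ∀ c ∈ cs, c ≠ t := fun c hc => hct c (by simp [hc])
    set a : Fin n → Bool := Function.update k t (xor (k t) (k c)) with ha
    have hentry : altSeq n t β (c :: cs) k' k =
        altSeq n t (fun i => β (i + 1)) cs k' a *
          Complex.exp (Complex.I * Complex.ofReal (β 0 * (if k t then -1 else 1) / 2)) := by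
      show ((altSeq n t (fun i => β (i + 1)) cs * CNOT n c t) * RZ n (β 0) t) k' k = _
      rw [RZ, Matrix.mul_diagonal]
      congr 1
      rw [Matrix.mul_apply]
      rw [Finset.sum_eq_single a]
      · simp [CNOT, ← ha]
      · intro b _ hb
        simp [CNOT, Ne.symm hb, hb, ← ha]
      · simp
    rw [hentry]
    rw [ih hct' _ _ _ ?_, zero_mul]
    have hpar : par cs a = par cs k := by
      apply par_congr
      intro c' hc'
      rw [ha, Function.update_of_ne (hct' c' hc')]
    have hat : a t = xor (k t) (k c) := by rw [ha]; simp
    intro hEq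
    apply h
    have hx : xor (xor (k t) (k c)) (par cs k) = xor (k t) (par (c :: cs) k) := by
      rw [Bool.xor_assoc]; rfl
    rw [hEq, ha, Function.update_idem, hpar, Function.update_self, hx]

/-- if every control value occurs an even number of times in the list
`(c₁,…,c_s)` of elements of `{1,…,n} \ {t}`, then the alternating sequence
`R_Z(−β₀;t), CNOT(c₁,t), R_Z(−β₁;t), …, CNOT(c_s,t), R_Z(−β_s;t)` is a diagonal matrix. -/
theorem stmt9 (n : ℕ) (hn : 2 ≤ n) (t : Fin n) (cs : List (Fin n))
    (hct : ∀ c ∈ cs, c ≠ t) (heven : ∀ v : Fin n, Even (cs.count v))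
    (β : ℕ → ℝ) :
    (altSeq n t β cs).IsDiag := by
  intro i j hij
  have hpar : par cs j = false := by
    have hev : Even (cs.countP (fun c => j c)) := by
      have : cs.countP (fun c => j c) =
          Multiset.card (Multiset.filter (fun a => j a) ↑cs) := by
        simp [List.countP_eq_length_filter]
      rw [this, ← Multiset.sum_count_eq_card (s := Finset.univ) (fun a _ => Finset.mem_univ a)]
      apply Finset.even_sum
      intro v _
      rw [Multiset.count_filter]
      split
      · simpa using heven v
      · exact Even.zero
    rw [← Bool.not_eq_true, par_true_iff, Nat.not_odd_iff_even]
    exact hev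
  apply key t cs hct β
  rw [hpar]
  simpa [Function.update_eq_self] using hij
end

section
/- Let t ∈ {1,…,n}, let (c_1,…,c_s) be a finite list of elements of {1,…,n}\{t} in which every value occurs an even number of times, and let β_0, β_1, …, β_s ∈ ℝ. Let S be the matrix obtained by applying, in order, R_Z(−β_0;t), CNOT(c_1,t), R_Z(−β_1;t), CNOT(c_2,t), …, CNOT(c_s,t), R_Z(−β_s;t). Then for every r ∈ {1,…,n} with r ≠ t and r ∉ {c_1,…,c_s}, the matrix S commutes with CNOT(t,r). -/
namespace Stmt10Aux

variable {n : ℕ}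

/-- "Generalized permutation with phase" matrix: sends basis vector `k` to `d k` times the
basis vector `F k`. -/
def GM (F : (Fin n → Bool) → (Fin n → Bool)) (d : (Fin n → Bool) → ℂ) :
    Matrix (Fin n → Bool) (Fin n → Bool) ℂ :=
  fun k' k => if k' = F k then d k else 0

lemma GM_mul (F F' : (Fin n → Bool) → (Fin n → Bool)) (d d' : (Fin n → Bool) → ℂ) :
    GM F d * GM F' d' = GM (fun k => F (F' k)) (fun k => d (F' k) * d' k) := by
  ext k' k
  rw [Matrix.mul_apply, Finset.sum_eq_single (F' k)]
  · simp [GM]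
  · intro j _ hj
    simp [GM, hj]
  · intro h; exact absurd (Finset.mem_univ _) h

lemma CNOT_eq_GM (c t : Fin n) :
    CNOT n c t = GM (fun k => Function.update k t (xor (k t) (k c))) (fun _ => 1) := rfl

lemma RZ_eq_GM (β : ℝ) (t : Fin n) :
    RZ n β t = GM id (fun k => Complex.exp (Complex.I *
      Complex.ofReal (β * (if k t then -1 else 1) / 2))) := by
  ext k' k
  by_cases h : k' = k
  · subst h; simp [RZ, GM]
  · simp [RZ, GM, Matrix.diagonal_apply, h]

/-- The accumulated phase of the alternating sequence. -/
noncomputable def ph (t : Fin n) : (ℕ → ℝ) → List (Fin n) → (Fin n → Bool) → ℂ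
  | β, [], k => Complex.exp (Complex.I *
      Complex.ofReal (β 0 * (if k t then -1 else 1) / 2))
  | β, c :: cs, k =>
      ph t (fun i => β (i + 1)) cs (Function.update k t (xor (k t) (k c))) *
        Complex.exp (Complex.I * Complex.ofReal (β 0 * (if k t then -1 else 1) / 2))

/-- The total xor of the control bits. -/
def fx (cs : List (Fin n)) (k : Fin n → Bool) : Bool :=
  cs.foldr (fun c b => xor (k c) b) false

@[simp] lemma fx_nil (k : Fin n → Bool) : fx ([] : List (Fin n)) k = false := rfl

@[simp] lemma fx_cons (c : Fin n) (cs : List (Fin n)) (k : Fin n → Bool) :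
    fx (c :: cs) k = xor (k c) (fx cs k) := rfl

lemma fx_update (cs : List (Fin n)) (a : Fin n) (ha : a ∉ cs) (k : Fin n → Bool) (v : Bool) :
    fx cs (Function.update k a v) = fx cs k := by
  induction cs with
  | nil => rfl
  | cons c cs ih =>
    have hca : c ≠ a := fun h => ha (h ▸ List.mem_cons_self (a := c) (l := cs))
    simp only [fx_cons, Function.update_of_ne hca]
    rw [ih (fun h => ha (List.mem_cons_of_mem _ h))]

lemma fx_append (l1 l2 : List (Fin n)) (k : Fin n → Bool) :
    fx (l1 ++ l2) k = xor (fx l1 k) (fx l2 k) := by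
  induction l1 with
  | nil => simp
  | cons c cs ih => simp [ih, Bool.xor_assoc]

lemma GM_congr {F F' : (Fin n → Bool) → (Fin n → Bool)} {d d' : (Fin n → Bool) → ℂ}
    (hF : ∀ k, F k = F' k) (hd : ∀ k, d k = d' k) : GM F d = GM F' d' := by
  funext k' k
  show (if k' = F k then d k else 0) = (if k' = F' k then d' k else 0)
  rw [hF k, hd k]

lemma fx_even (cs : List (Fin n)) (h : ∀ v : Fin n, Even (cs.count v))
    (k : Fin n → Bool) : fx cs k = false := by
  generalize hm : cs.length = m
  induction m using Nat.strong_induction_on generalizing cs with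
  | _ m ih =>
  match cs, h, hm with
  | [], _, _ => rfl
  | c :: cs', h, hm =>
    have hc : c ∈ cs' := by
      by_contra hmem
      have h1 := h c
      rw [List.count_cons_self, List.count_eq_zero_of_not_mem hmem] at h1
      simp at h1
    obtain ⟨l1, l2, rfl⟩ := List.append_of_mem hc
    have hcount : ∀ v : Fin n, Even ((l1 ++ l2).count v) := by
      intro v
      have h1 := h v
      simp only [List.count_cons, List.count_append, Nat.even_iff] at h1 ⊢
      rcases eq_or_ne v c with rfl | hvc <;> simp_all <;> omega
    have hlen : (l1 ++ l2).length < m := by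
      subst hm; simp
    have hres := ih _ hlen (l1 ++ l2) hcount rfl
    rw [fx_append] at hres
    simp only [fx_cons, fx_append]
    cases hl1 : fx l1 k <;> cases hl2 : fx l2 k <;> cases hkc : k c <;>
      simp_all

/-- The phase does not depend on the bit at a position `r` outside `{t} ∪ cs`. -/
lemma ph_update (t : Fin n) (r : Fin n) (hrt : r ≠ t) :
    ∀ (β : ℕ → ℝ) (cs : List (Fin n)), r ∉ cs →
      ∀ (k : Fin n → Bool) (x : Bool), ph t β cs (Function.update k r x) = ph t β cs k := by
  intro β cs
  induction cs generalizing β with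
  | nil =>
    intro _ k x
    simp [ph, Function.update_of_ne hrt.symm]
  | cons c cs ih =>
    intro hr k x
    have hrc : r ≠ c := fun h => hr (h ▸ List.mem_cons_self (a := c) (l := cs))
    have hr' : r ∉ cs := fun h => hr (List.mem_cons_of_mem _ h)
    simp only [ph, Function.update_of_ne hrt.symm, Function.update_of_ne hrc.symm]
    rw [Function.update_comm hrt, ih _ hr']

/-- The alternating sequence as a generalized permutation matrix. -/
lemma altSeq_eq (t : Fin n) (β : ℕ → ℝ) (cs : List (Fin n)) (hct : ∀ c ∈ cs, c ≠ t) :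
    altSeq n t β cs =
      GM (fun k => Function.update k t (xor (k t) (fx cs k))) (ph t β cs) := by
  induction cs generalizing β with
  | nil =>
    rw [altSeq, RZ_eq_GM]
    refine GM_congr (fun k => ?_) (fun k => rfl)
    simp [Function.update_eq_self]
  | cons c cs ih =>
    have hct' : ∀ c' ∈ cs, c' ≠ t := fun c' h => hct c' (List.mem_cons_of_mem _ h)
    have htc : c ≠ t := hct c (List.mem_cons_self (a := c) (l := cs))
    have htcs : t ∉ cs := fun h => hct' t h rfl
    rw [altSeq, ih _ hct', CNOT_eq_GM, RZ_eq_GM, GM_mul, GM_mul]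
    refine GM_congr (fun k => ?_) (fun k => ?_)
    · simp only [id_eq]
      rw [Function.update_idem, Function.update_self, fx_update cs t htcs]
      simp [Bool.xor_assoc]
    · simp only [id_eq, mul_one]
      rfl

end Stmt10Aux

/-- if every control value occurs an even number of times in the list
`(c₁,…,c_s)` of elements of `{1,…,n} \ {t}`, then the matrix `S` of the alternating
sequence `R_Z(−β₀;t), CNOT(c₁,t), …, CNOT(c_s,t), R_Z(−β_s;t)` commutes with
`CNOT(t,r)` for every `r ≠ t` with `r ∉ {c₁,…,c_s}`. -/
theorem stmt10 (n : ℕ) (hn : 2 ≤ n) (t : Fin n) (cs : List (Fin n))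
    (hct : ∀ c ∈ cs, c ≠ t) (heven : ∀ v : Fin n, Even (cs.count v))
    (β : ℕ → ℝ) (r : Fin n) (hrt : r ≠ t) (hrcs : r ∉ cs) :
    Commute (altSeq n t β cs) (CNOT n t r) := by
  have hfx : ∀ k : Fin n → Bool, Stmt10Aux.fx cs k = false :=
    fun k => Stmt10Aux.fx_even cs heven k
  have hS : altSeq n t β cs = Stmt10Aux.GM id (Stmt10Aux.ph t β cs) := by
    rw [Stmt10Aux.altSeq_eq t β cs hct]
    refine Stmt10Aux.GM_congr (fun k => ?_) (fun k => rfl)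
    rw [hfx k]
    simp [Function.update_eq_self]
  unfold Commute SemiconjBy
  rw [hS, Stmt10Aux.CNOT_eq_GM, Stmt10Aux.GM_mul, Stmt10Aux.GM_mul]
  refine Stmt10Aux.GM_congr (fun k => rfl) (fun k => ?_)
  simp only [id_eq, one_mul, mul_one]
  exact Stmt10Aux.ph_update t r hrt β cs hrcs k _
end

section
/- (Uniform circuit rewriting rule, Theorem 2.) Let n ≥ 3 and 2 ≤ p ≤ n−1, and write cc_set(p) = (c_1,…,c_{2^{p−1}}). For any angles β_1,…,β_{2^{p−1}−1} ∈ ℝ, the matrix S_p obtained by applying, in order, CNOT(c_1,p), R_Z(−β_1;p), CNOT(c_2,p), R_Z(−β_2;p), …, R_Z(−β_{2^{p−1}−1};p), CNOT(c_{2^{p−1}},p) (an alternating sequence of 2^{p−1} CNOT gates with target p and 2^{p−1}−1 R_Z gates on qubit p) commutes with CNOT(p,n). -/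
/-- The qubit numbered `v ∈ {1,…,n}`, as an element of `Fin n` (1-indexed to 0-indexed). -/
def qb (n : ℕ) (hn : 0 < n) (v : ℕ) : Fin n :=
  if h : v - 1 < n then ⟨v - 1, h⟩ else ⟨0, hn⟩

/-- `ccSet p` is the list `cc_set(p)` of length `2^{p−1}` with entries in `{1,…,p−1}`:
`cc_set(2) = (1,1)` and, for `p ≥ 3`, `cc_set(p)` is the concatenation of two copies of
the list obtained from `cc_set(p−1)` by replacing its `2^{p−2}`-th entry with `p−1`. -/
def ccSet : ℕ → List ℕ
  | 0 => []
  | 1 => []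
  | 2 => [1, 1]
  | p + 3 =>
    let l := (ccSet (p + 2)).set (2 ^ (p + 1) - 1) (p + 2)
    l ++ l

/- ### Auxiliary material -/

/-- The action of a CNOT gate on basis states. -/
def cnotF {n : ℕ} (c t : Fin n) (k : Fin n → Bool) : Fin n → Bool :=
  Function.update k t (xor (k t) (k c))

lemma cnotF_invol {n : ℕ} {c t : Fin n} (h : c ≠ t) (k : Fin n → Bool) :
    cnotF c t (cnotF c t k) = k := by
  simp [cnotF, Function.update_of_ne h, Bool.xor_assoc]

lemma CNOT_apply {n : ℕ} (c t : Fin n) (k' k : Fin n → Bool) :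
    CNOT n c t k' k = if k' = cnotF c t k then 1 else 0 := rfl

lemma CNOT_mul_apply {n : ℕ} {c t : Fin n} (h : c ≠ t)
    (M : Matrix (Fin n → Bool) (Fin n → Bool) ℂ) (k' k : Fin n → Bool) :
    (CNOT n c t * M) k' k = M (cnotF c t k') k := by
  rw [Matrix.mul_apply]
  have h2 : ∀ k'', CNOT n c t k' k'' = if k'' = cnotF c t k' then 1 else 0 := by
    intro k''
    rw [CNOT_apply]
    congr 1
    simp only [eq_iff_iff]
    constructor
    · intro hh; rw [hh, cnotF_invol h]
    · intro hh; rw [hh, cnotF_invol h]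
  simp only [h2, ite_mul, one_mul, zero_mul, Finset.sum_ite_eq', Finset.mem_univ, if_true]

lemma mul_CNOT_apply {n : ℕ} (c t : Fin n)
    (M : Matrix (Fin n → Bool) (Fin n → Bool) ℂ) (k' k : Fin n → Bool) :
    (M * CNOT n c t) k' k = M k' (cnotF c t k) := by
  rw [Matrix.mul_apply]
  simp only [CNOT_apply, mul_ite, mul_one, mul_zero, Finset.sum_ite_eq', Finset.mem_univ,
    if_true]

lemma ccSet_length (p : ℕ) : (ccSet (p+2)).length = 2 ^ (p+1) := by
  induction p with
  | zero => rfl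
  | succ q ih =>
    show ((ccSet (q+2)).set (2^(q+1)-1) (q+2) ++ (ccSet (q+2)).set (2^(q+1)-1) (q+2)).length = _
    simp only [List.length_append, List.length_set, ih, pow_succ]
    ring

lemma ccSet_mem : ∀ p, ∀ x ∈ ccSet (p+2), 1 ≤ x ∧ x ≤ p + 1 := by
  intro p
  induction p with
  | zero => intro x hx; simp [ccSet] at hx; omega
  | succ q ih =>
    intro x hx
    have hx' : x ∈ (ccSet (q+2)).set (2^(q+1)-1) (q+2) := by
      have : ccSet (q+3) = (ccSet (q+2)).set (2^(q+1)-1) (q+2) ++ (ccSet (q+2)).set (2^(q+1)-1) (q+2) := rfl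
      rw [this, List.mem_append] at hx
      tauto
    rcases List.mem_or_eq_of_mem_set hx' with h | h
    · have := ih x h; omega
    · omega

lemma foldr_xor_eq (l : List Bool) (b : Bool) :
    l.foldr xor b = xor (l.foldr xor false) b := by
  induction l with
  | nil => simp
  | cons a t ih => simp [ih, Bool.xor_assoc]

lemma foldr_xor_append (l1 l2 : List Bool) :
    (l1 ++ l2).foldr xor false = xor (l1.foldr xor false) (l2.foldr xor false) := by
  rw [List.foldr_append, foldr_xor_eq]

lemma ccSet_xor (p : ℕ) (g : ℕ → Bool) :
    ((ccSet (p+2)).map g).foldr xor false = false := by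
  cases p with
  | zero => simp [ccSet]
  | succ q =>
    have : ccSet (q+3) = (ccSet (q+2)).set (2^(q+1)-1) (q+2) ++ (ccSet (q+2)).set (2^(q+1)-1) (q+2) := rfl
    rw [this, List.map_append, foldr_xor_append, Bool.xor_self]

lemma map_range_getD (L : List ℕ) :
    (List.range L.length).map (fun i => L.getD i 0) = L := by
  apply List.ext_getElem
  · simp
  · intro i h1 h2
    simp [List.getD_eq_getElem?_getD, List.getElem?_eq_getElem h2]

/-- The running XOR of the control bits. -/
def sX {n : ℕ} (c : ℕ → Fin n) : ℕ → (Fin n → Bool) → Bool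
  | 0, k => k (c 0)
  | (N+1), k => xor (sX c N k) (k (c (N+1)))

lemma sX_update {n : ℕ} {c : ℕ → Fin n} {t : Fin n} (hc : ∀ i, c i ≠ t)
    (N : ℕ) (k : Fin n → Bool) (b : Bool) :
    sX c N (Function.update k t b) = sX c N k := by
  induction N with
  | zero => simp [sX, Function.update_of_ne (hc 0)]
  | succ m ih => simp [sX, ih, Function.update_of_ne (hc (m+1))]

lemma sX_eq_foldr {n : ℕ} (c : ℕ → Fin n) (N : ℕ) (k : Fin n → Bool) :
    sX c N k = ((List.range (N+1)).map fun i => k (c i)).foldr xor false := by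
  induction N with
  | zero => simp [sX, List.range_succ]
  | succ m ih =>
    rw [List.range_succ, List.map_append, foldr_xor_append, ← ih]
    simp [sX]

lemma invariant {n : ℕ} (tp tn : Fin n) (htpn : tp ≠ tn) (c : ℕ → Fin n)
    (hcp : ∀ i, c i ≠ tp) (hcn : ∀ i, c i ≠ tn) (β : ℕ → ℝ) (N : ℕ) :
    ∃ φ : (Fin n → Bool) → ℂ,
      (∀ k b, φ (Function.update k tn b) = φ k) ∧
      ∀ k' k, ((List.range N).foldl
          (fun M i => CNOT n (c (i+1)) tp * RZ n (β (i+1)) tp * M)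
          (CNOT n (c 0) tp)) k' k
        = if k' = Function.update k tp (xor (k tp) (sX c N k)) then φ k else 0 := by
  induction N with
  | zero =>
    refine ⟨fun _ => 1, fun k b => rfl, fun k' k => ?_⟩
    simp [CNOT_apply, cnotF, sX]
    exact if_congr Iff.rfl rfl rfl
  | succ N ih =>
    obtain ⟨φ, hφt, hmat⟩ := ih
    have hfold : (List.range (N+1)).foldl
          (fun M i => CNOT n (c (i+1)) tp * RZ n (β (i+1)) tp * M)
          (CNOT n (c 0) tp)
        = CNOT n (c (N+1)) tp * RZ n (β (N+1)) tp *
          ((List.range N).foldl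
            (fun M i => CNOT n (c (i+1)) tp * RZ n (β (i+1)) tp * M)
            (CNOT n (c 0) tp)) := by
      rw [List.range_succ, List.foldl_append]
      rfl
    have hFG : ∀ k : Fin n → Bool,
        cnotF (c (N+1)) tp (Function.update k tp (xor (k tp) (sX c N k)))
          = Function.update k tp (xor (k tp) (sX c (N+1) k)) := by
      intro k
      simp [cnotF, sX, Function.update_of_ne (hcp (N+1)), Bool.xor_assoc]
    refine ⟨fun k => Complex.exp (Complex.I *
        Complex.ofReal ((β (N+1)) * (if xor (k tp) (sX c N k) then -1 else 1) / 2)) * φ k,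
        ?_, ?_⟩
    · intro k b
      simp only
      rw [sX_update hcn, Function.update_of_ne htpn, hφt]
    · intro k' k
      rw [hfold, Matrix.mul_assoc, CNOT_mul_apply (hcp (N+1)), RZ, Matrix.diagonal_mul,
        hmat]
      by_cases hcase : k' = Function.update k tp (xor (k tp) (sX c (N+1) k))
      · have h1 : cnotF (c (N+1)) tp k' = Function.update k tp (xor (k tp) (sX c N k)) := by
          rw [hcase, ← hFG k, cnotF_invol (hcp (N+1))]
        rw [if_pos hcase, h1, if_pos rfl]
        simp
      · have h1 : cnotF (c (N+1)) tp k' ≠ Function.update k tp (xor (k tp) (sX c N k)) := by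
          intro h
          exact hcase (by rw [← cnotF_invol (hcp (N+1)) k', h, hFG])
        rw [if_neg hcase, if_neg h1, mul_zero]

/-- uniform circuit rewriting rule, Theorem 2: for `3 ≤ n` and
`2 ≤ p ≤ n−1`, writing `cc_set(p) = (c₁,…,c_{2^{p−1}})`, the matrix `S_p` obtained by
applying, in order, `CNOT(c₁,p), R_Z(−β₁;p), CNOT(c₂,p), …, R_Z(−β_{2^{p−1}−1};p),
CNOT(c_{2^{p−1}},p)` commutes with `CNOT(p,n)`. -/
theorem stmt11 (n p : ℕ) (hn : 3 ≤ n) (hn0 : 0 < n) (hp2 : 2 ≤ p) (hpn : p ≤ n - 1)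
    (β : ℕ → ℝ) :
    Commute
      ((List.range (2 ^ (p - 1) - 1)).foldl
        (fun M i =>
          CNOT n (qb n hn0 ((ccSet p).getD (i + 1) 0)) (qb n hn0 p) *
            RZ n (β (i + 1)) (qb n hn0 p) * M)
        (CNOT n (qb n hn0 ((ccSet p).getD 0 0)) (qb n hn0 p)))
      (CNOT n (qb n hn0 p) (qb n hn0 n)) := by
  obtain ⟨q, rfl⟩ : ∃ q, p = q + 2 := ⟨p - 2, by omega⟩
  set p := q + 2 with hp
  have hp1 : p - 1 < n := by omega
  have hn1 : n - 1 < n := by omega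
  have htp : qb n hn0 p = ⟨p - 1, hp1⟩ := by rw [qb, dif_pos hp1]
  have htn : qb n hn0 n = ⟨n - 1, hn1⟩ := by rw [qb, dif_pos hn1]
  have htpn : qb n hn0 p ≠ qb n hn0 n := by
    rw [htp, htn]
    intro h
    have := Fin.val_eq_of_eq h
    simp only at this
    omega
  -- bounds on control values
  have hval : ∀ i, (ccSet p).getD i 0 ≤ p - 1 := by
    intro i
    by_cases hlen : i < (ccSet p).length
    · have hmem : (ccSet p).getD i 0 ∈ ccSet p := by
        rw [List.getD_eq_getElem _ _ hlen]
        exact List.getElem_mem hlen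
      have := ccSet_mem q _ hmem
      omega
    · rw [List.getD_eq_default _ _ (by omega)]
      omega
  have hcval : ∀ i, qb n hn0 ((ccSet p).getD i 0) = ⟨(ccSet p).getD i 0 - 1, by have := hval i; omega⟩ := by
    intro i
    rw [qb, dif_pos]
  have hcp : ∀ i, qb n hn0 ((ccSet p).getD i 0) ≠ qb n hn0 p := by
    intro i h
    rw [hcval i, htp] at h
    have := Fin.val_eq_of_eq h
    simp only at this
    have := hval i
    omega
  have hcn : ∀ i, qb n hn0 ((ccSet p).getD i 0) ≠ qb n hn0 n := by
    intro i h
    rw [hcval i, htn] at h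
    have := Fin.val_eq_of_eq h
    simp only at this
    have := hval i
    omega
  obtain ⟨φ, hφt, hmat⟩ := invariant (qb n hn0 p) (qb n hn0 n) htpn
    (fun i => qb n hn0 ((ccSet p).getD i 0)) hcp hcn β (2 ^ (p - 1) - 1)
  -- the total XOR vanishes
  have hsX : ∀ k : Fin n → Bool,
      sX (fun i => qb n hn0 ((ccSet p).getD i 0)) (2 ^ (p - 1) - 1) k = false := by
    intro k
    rw [sX_eq_foldr]
    have hlen : 2 ^ (p - 1) - 1 + 1 = (ccSet p).length := by
      have hpq : p - 1 = q + 1 := by omega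
      rw [ccSet_length q, hpq]
      have : 0 < 2 ^ (q + 1) := Nat.pow_pos (by omega)
      omega
    rw [hlen]
    have : ((List.range (ccSet p).length).map fun i =>
          k (qb n hn0 ((ccSet p).getD i 0)))
        = (ccSet p).map fun v => k (qb n hn0 v) := by
      conv_rhs => rw [← map_range_getD (ccSet p)]
      rw [List.map_map]
      rfl
    rw [this]
    exact ccSet_xor q _
  -- the circuit is a diagonal matrix whose phase does not involve qubit n
  have hM : ((List.range (2 ^ (p - 1) - 1)).foldl
        (fun M i =>
          CNOT n (qb n hn0 ((ccSet p).getD (i + 1) 0)) (qb n hn0 p) *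
            RZ n (β (i + 1)) (qb n hn0 p) * M)
        (CNOT n (qb n hn0 ((ccSet p).getD 0 0)) (qb n hn0 p)))
      = fun k' k => if k' = k then φ k else 0 := by
    funext k' k
    rw [hmat k' k, hsX k]
    simp
  rw [Commute, SemiconjBy, hM]
  ext k' k
  erw [mul_CNOT_apply, CNOT_mul_apply htpn]
  by_cases hcase : k' = cnotF (qb n hn0 p) (qb n hn0 n) k
  · rw [if_pos hcase]
    have h2 : cnotF (qb n hn0 p) (qb n hn0 n) k' = k := by
      rw [hcase, cnotF_invol htpn]
    rw [if_pos h2]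
    exact hφt k _
  · rw [if_neg hcase, if_neg]
    intro h
    exact hcase (by rw [← cnotF_invol htpn k', h])
end

section
/- Let n ≥ 2 and γ ∈ ℝ. The product Π_{1 ≤ c < t ≤ n} SC(γ;c,t), taken over all pairs of qubits (in any order, since all factors are diagonal matrices), equals the diagonal matrix D(θ) whose (k,k) entry is exp(i θ_k) with θ_k = γ Σ_{1 ≤ c < t ≤ n} (−1)^{k_c ⊕ k_t}. -/
open scoped BigOperators

/-- `SC(γ;c,t) = CNOT(c,t) · R_Z(−2γ; t) · CNOT(c,t)`. -/
noncomputable def SC (n : ℕ) (γ : ℝ) (c t : Fin n) :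
    Matrix (Fin n → Bool) (Fin n → Bool) ℂ :=
  CNOT n c t * RZ n (2 * γ) t * CNOT n c t

lemma Dmat_mul (n : ℕ) (θ1 θ2 : (Fin n → Bool) → ℝ) :
    Dmat n θ1 * Dmat n θ2 = Dmat n (θ1 + θ2) := by
  unfold Dmat
  rw [Matrix.diagonal_mul_diagonal]
  apply congrArg Matrix.diagonal
  funext k
  rw [← Complex.exp_add]
  simp only [Pi.add_apply]
  push_cast
  ring

lemma Dmat_zero (n : ℕ) : Dmat n (fun _ => 0) = 1 := by
  unfold Dmat; simp

lemma SC_diag (n : ℕ) (γ : ℝ) (c t : Fin n) (hct : c ≠ t) :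
    SC n γ c t = Dmat n (fun k => γ * (if xor (k c) (k t) then -1 else 1)) := by
  have hσ : ∀ k : Fin n → Bool,
      Function.update (Function.update k t (xor (k t) (k c))) t
        (xor ((Function.update k t (xor (k t) (k c))) t)
             ((Function.update k t (xor (k t) (k c))) c)) = k := by
    intro k
    funext q
    rcases eq_or_ne q t with rfl | hq
    · simp [Function.update_self, Function.update_of_ne hct]
    · simp [Function.update_of_ne hq]
  ext i k
  unfold SC RZ Dmat
  simp only [Matrix.mul_apply, Matrix.mul_diagonal, Matrix.diagonal_apply]
  unfold CNOT
  simp only [ite_mul, mul_ite, one_mul, mul_one, zero_mul, mul_zero]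
  simp only [Finset.sum_ite_eq', Finset.mem_univ, if_true]
  rw [hσ k, Function.update_self]
  rcases eq_or_ne i k with rfl | h
  · rw [if_pos rfl, if_pos rfl, Bool.xor_comm (i c)]
    split_ifs <;> · congr 1; push_cast; ring
  · rw [if_neg h, if_neg h]

lemma prod_SC_eq (n : ℕ) (γ : ℝ) :
    ∀ L : List (Fin n × Fin n), (∀ ct ∈ L, ct.1 ≠ ct.2) →
      (L.map fun ct => SC n γ ct.1 ct.2).prod =
        Dmat n (fun k =>
          (L.map fun ct => γ * (if xor (k ct.1) (k ct.2) then (-1:ℝ) else 1)).sum) := by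
  intro L
  induction L with
  | nil => intro _; simp [Dmat_zero]
  | cons a L ih =>
    intro h
    simp only [List.map_cons, List.prod_cons, List.sum_cons]
    rw [SC_diag n γ a.1 a.2 (h a (List.mem_cons_self (a := a) (l := L))),
      ih (fun ct hct => h ct (List.mem_cons_of_mem a hct)), Dmat_mul]
    rfl


/-- the product `Π_{1 ≤ c < t ≤ n} SC(γ;c,t)` over all pairs of qubits,
taken in any order (all factors are diagonal matrices), equals the diagonal matrix
`D(θ)` with `θ_k = γ Σ_{1 ≤ c < t ≤ n} (−1)^{k_c ⊕ k_t}`. -/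
theorem stmt18 (n : ℕ) (hn : 2 ≤ n) (γ : ℝ) (θ : (Fin n → Bool) → ℝ)
    (hθ : ∀ k, θ k = γ *
      ∑ ct ∈ Finset.univ.filter (fun ct : Fin n × Fin n => ct.1 < ct.2),
        (if xor (k ct.1) (k ct.2) then (-1 : ℝ) else 1)) :
    ∀ l : List (Fin n × Fin n),
      l.Perm (Finset.univ.filter (fun ct : Fin n × Fin n => ct.1 < ct.2)).toList →
      (l.map fun ct => SC n γ ct.1 ct.2).prod = Dmat n θ := by
  intro l hl
  have hne : ∀ ct ∈ l, ct.1 ≠ ct.2 := by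
    intro ct hct
    have := hl.mem_iff.mp hct
    rw [Finset.mem_toList, Finset.mem_filter] at this
    exact ne_of_lt this.2
  rw [prod_SC_eq n γ l hne]
  refine congrArg (Dmat n) (funext fun k => ?_)
  rw [hθ k, Finset.mul_sum, ← Finset.sum_map_toList]
  exact List.Perm.sum_eq (hl.map fun ct => γ * (if xor (k ct.1) (k ct.2) then (-1:ℝ) else 1))
end
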